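/- Type instantiation preserves kinds: if τ has kind κ under a kind context assigning kinds κᵢ to type variables αᵢ, and each instantiating type ρᵢ has kind κᵢ under Δ, then the substituted type τ[ρᵢ/αᵢ] has kind κ under Δ. (The substitution replaces each αᵢ by ρᵢ and each observed variable αᵢ! by bang(ρᵢ).) -/
import Mathlib


inductive Perm | D | S | E
deriving DecidableEq

abbrev Kind := Set Perm

inductive Mode | readOnly | writable | unboxed

def kindOf : Mode → Kind
  | .readOnly => {Perm.D, Perm.S}
  | .writable => {Perm.E}
  | .unboxed  => {Perm.D, Perm.S, Perm.E}

/-- Types, including observed type variables `ovar` (written α!). -/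
inductive Ty
  | unit
  | prim
  | fn (a b : Ty)
  | var (n : ℕ)
  | ovar (n : ℕ)
  | variant (ts : List Ty)
  | record (fs : List (Ty × Bool)) (m : Mode)

/-- bang on kinds. -/
noncomputable def bangKind (κ : Kind) : Kind :=
  open Classical in
  if ({Perm.D, Perm.S} : Kind) ⊆ κ then κ else {Perm.D, Perm.S}

/-- bang on modes. -/
def bangMode : Mode → Mode
  | .readOnly => .readOnly
  | .writable => .readOnly
  | .unboxed  => .unboxed

/-- bang on types. -/
def bangTy : Ty → Ty
  | .unit => .unit
  | .prim => .prim
  | .fn a b => .fn a b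
  | .var n => .ovar n
  | .ovar n => .ovar n
  | .variant ts => .variant (ts.attach.map (fun t => bangTy t.1))
  | .record fs m => .record (fs.attach.map (fun p => (bangTy p.1.1, p.1.2))) (bangMode m)
  decreasing_by
  · simp only [Ty.variant.sizeOf_spec]
    have := List.sizeOf_lt_of_mem t.2; omega
  · simp only [Ty.record.sizeOf_spec]
    have := List.sizeOf_lt_of_mem p.2
    cases hp : p.1 with | mk a b => rw [hp] at this; simp at this ⊢; omega

/-- The kinding judgement `Δ ⊢ τ : κ`. -/
inductive Kinding (Δ : ℕ → Kind) : Ty → Kind → Prop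
  | unit : Kinding Δ .unit κ
  | prim : Kinding Δ .prim κ
  | fn : Kinding Δ (.fn a b) κ
  | var : κ ⊆ Δ n → Kinding Δ (.var n) κ
  | ovar : κ ⊆ bangKind (Δ n) → Kinding Δ (.ovar n) κ
  | variant : (∀ t ∈ ts, Kinding Δ t κ) → Kinding Δ (.variant ts) κ
  | record : κ ⊆ kindOf m → (∀ p ∈ fs, p.2 = false → Kinding Δ p.1 κ) →
      Kinding Δ (.record fs m) κ

/-- Substitution of types for type variables; observed variables α! are mapped
    to bang of the substituted type. -/
def substTy (σ : ℕ → Ty) : Ty → Ty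
  | .unit => .unit
  | .prim => .prim
  | .fn a b => .fn (substTy σ a) (substTy σ b)
  | .var n => σ n
  | .ovar n => bangTy (σ n)
  | .variant ts => .variant (ts.attach.map (fun t => substTy σ t.1))
  | .record fs m => .record (fs.attach.map (fun p => (substTy σ p.1.1, p.1.2))) m
  decreasing_by
  · simp only [Ty.fn.sizeOf_spec]; omega
  · simp only [Ty.fn.sizeOf_spec]; omega
  · simp only [Ty.variant.sizeOf_spec]
    have := List.sizeOf_lt_of_mem t.2; omega
  · simp only [Ty.record.sizeOf_spec]
    have := List.sizeOf_lt_of_mem p.2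
    cases hp : p.1 with | mk a b => rw [hp] at this; simp at this ⊢; omega

lemma bangKind_subset_self (κ : Kind) : ({Perm.D, Perm.S} : Kind) ⊆ bangKind κ := by
  unfold bangKind; split <;> simp_all

lemma bangKind_mono {κ κ' : Kind} (h : κ ⊆ κ') : bangKind κ ⊆ bangKind κ' := by
  unfold bangKind
  split <;> split
  · exact h
  · rename_i h1 h2; exact absurd (h1.trans h) h2
  · exact bangKind_subset_self κ' |>.trans (by unfold bangKind; split <;> simp_all)
  · exact subset_rfl

lemma bangKind_idem (κ : Kind) : bangKind (bangKind κ) = bangKind κ := by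
  unfold bangKind
  split <;> simp_all

lemma kinding_weaken {Δ : ℕ → Kind} {τ : Ty} {κ κ' : Kind}
    (h : Kinding Δ τ κ) (hs : κ' ⊆ κ) : Kinding Δ τ κ' := by
  induction h generalizing κ' with
  | unit => exact .unit
  | prim => exact .prim
  | fn => exact .fn
  | var h => exact .var (hs.trans h)
  | ovar h => exact .ovar (hs.trans h)
  | variant _ ih => exact .variant (fun t ht => ih t ht hs)
  | record h1 _ ih => exact .record (hs.trans h1) (fun p hp h2 => ih p hp h2 hs)

lemma kinding_bang {Δ : ℕ → Kind} {τ : Ty} {κ : Kind}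
    (h : Kinding Δ τ κ) : Kinding Δ (bangTy τ) (bangKind κ) := by
  induction h with
  | unit => rw [bangTy]; exact .unit
  | prim => rw [bangTy]; exact .prim
  | fn => rw [bangTy]; exact .fn
  | var h => rw [bangTy]; exact .ovar (bangKind_mono h)
  | ovar h =>
    rw [bangTy]
    have := bangKind_mono h
    rw [bangKind_idem] at this
    exact .ovar this
  | variant _ ih =>
    rw [bangTy]
    refine .variant (fun t ht => ?_)
    simp only [List.mem_map, List.mem_attach, true_and, Subtype.exists] at ht
    obtain ⟨a, ha, rfl⟩ := ht
    exact ih a ha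
  | @record κ m fs h1 h2 ih =>
    rw [bangTy]
    refine .record ?_ (fun p hp h2 => ?_)
    · cases m with
      | readOnly =>
        simp only [bangMode, kindOf] at h1 ⊢
        unfold bangKind
        split
        · exact h1
        · exact subset_rfl
      | writable =>
        have hn : ¬ ({Perm.D, Perm.S} : Kind) ⊆ κ := by
          intro hc
          have := h1 (hc (Set.mem_insert _ _))
          simp only [kindOf, Set.mem_singleton_iff] at this
          exact Perm.noConfusion this
        simp only [bangMode, kindOf]
        unfold bangKind
        rw [if_neg hn]
      | unboxed =>
        intro p _; simp [kindOf, bangMode]; cases p <;> simp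
    · simp only [List.mem_map, List.mem_attach, true_and, Subtype.exists] at hp
      obtain ⟨a, ha, heq⟩ := hp
      obtain ⟨a1, a2⟩ := a
      cases heq
      have : a2 = false := by simpa using h2
      subst this
      exact ih _ ha rfl

/-- Type instantiation preserves kinds: if `τ` has kind `κ` under the kind
    context `Δ₀` assigning kinds to type variables, and each instantiating type
    `σ n` has kind `Δ₀ n` under `Δ`, then the substituted type has kind `κ`
    under `Δ`. -/
theorem kinding_subst {Δ₀ Δ : ℕ → Kind} {σ : ℕ → Ty} {τ : Ty} {κ : Kind}
    (h : Kinding Δ₀ τ κ) (hσ : ∀ n, Kinding Δ (σ n) (Δ₀ n)) :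
    Kinding Δ (substTy σ τ) κ := by
  induction h with
  | unit => rw [substTy]; exact .unit
  | prim => rw [substTy]; exact .prim
  | fn => rw [substTy]; exact .fn
  | var h => rw [substTy]; exact kinding_weaken (hσ _) h
  | ovar h => rw [substTy]; exact kinding_weaken (kinding_bang (hσ _)) h
  | variant _ ih =>
    rw [substTy]
    refine .variant (fun t ht => ?_)
    simp only [List.mem_map, List.mem_attach, true_and, Subtype.exists] at ht
    obtain ⟨a, ha, rfl⟩ := ht
    exact ih a ha
  | record h1 _ ih =>
    rw [substTy]
    refine .record h1 (fun p hp h2 => ?_)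
    simp only [List.mem_map, List.mem_attach, true_and, Subtype.exists] at hp
    obtain ⟨a, ha, heq⟩ := hp
    obtain ⟨a1, a2⟩ := a
    cases heq
    have : a2 = false := by simpa using h2
    subst this
    exact ih _ ha rfl
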